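/- arXiv:1009.2446 — 2 statements merged into one kernel-verified Lean document; each statement's English description precedes it below -/
import Mathlib

section
/- Identify the basis e₁,e₂,e₃ of V = K^3 with the three nonzero elements of the field 𝔽₄. Let g: V → V^{⊗n} be any composition of tensor products of λ (λ(eᵢ) = eⱼ⊗eₖ + eₖ⊗eⱼ) and identity maps (a descendant binary tree operator). If the coefficient of e_{i(1)}⊗⋯⊗e_{i(n)} in g(eᵢ) is nonzero, then eᵢ = e_{i(1)} + e_{i(2)} + ⋯ + e_{i(n)} in 𝔽₄. -/
noncomputable section

/-- The model of `V^{⊗ n}` as the free `K`-module on colorings `Fin n → Fin 3`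
(the canonical tensor basis of `(K^3)^{⊗ n}`). -/
abbrev W (K : Type*) [Field K] (n : ℕ) := (Fin n → Fin 3) → K

/-- Insert the pair of colors `(a, b)` at position `p`, replacing the color `c p`. -/
def ins {n : ℕ} (p : Fin n) (c : Fin n → Fin 3) (a b : Fin 3) : Fin (n + 1) → Fin 3 :=
  fun q =>
    if h1 : q.val < p.val then c ⟨q.val, by have := p.isLt; omega⟩
    else if h2 : q.val = p.val then a
    else if h3 : q.val = p.val + 1 then b
    else c ⟨q.val - 1, by have := q.isLt; omega⟩

/-- The operator `id^{⊗ p} ⊗ λ ⊗ id^{⊗ (n - 1 - p)} : V^{⊗ n} → V^{⊗ (n+1)}`, where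
`λ` is the Penrose splitting `λ(e_i) = e_j ⊗ e_k + e_k ⊗ e_j` for `{i,j,k} = {1,2,3}`
(colors are elements of `Fin 3 = ℤ/3`, so the two splittings of `i` are
`(i+1, i+2)` and `(i+2, i+1)`). -/
def treeStep (K : Type*) [Field K] {n : ℕ} (p : Fin n) : W K n →ₗ[K] W K (n + 1) :=
  (Pi.basisFun K (Fin n → Fin 3)).constr K fun c =>
    Pi.single (ins p c (c p + 1) (c p + 2)) 1 + Pi.single (ins p c (c p + 2) (c p + 1)) 1

/-- Descendant binary tree operators `V → V^{⊗ n}`: compositions of maps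
`id^{⊗ p} ⊗ λ ⊗ id^{⊗ q}` starting from `id_V`. -/
inductive IsTree (K : Type*) [Field K] : {n : ℕ} → (W K 1 →ₗ[K] W K n) → Prop
  | id : IsTree K LinearMap.id
  | step {n : ℕ} (p : Fin n) {g : W K 1 →ₗ[K] W K n} :
      IsTree K g → IsTree K (treeStep K p ∘ₗ g)

/-- The basis vector `e_i` of `V = W K 1`. -/
def eW (K : Type*) [Field K] (i : Fin 3) : W K 1 := Pi.single (fun _ => i) 1

/-- The inner product on `V^{⊗ n}` making the canonical tensor basis orthonormal. -/
def ip {K : Type*} [Field K] {n : ℕ} (f g : W K n) : K := ∑ c, f c * g c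

end

/-!
A tree operator only ever replaces a color `x` at some position by the pair `(x + 1, x + 2)` or
`(x + 2, x + 1)`. Under `φ` the three colors are the three nonzero elements of the Klein four-group
`(𝔽₄, +)`, where any two of them add up to the third, so `∑ q, φ (c q)` is unchanged by each
splitting and equals `φ i` for the single leaf of `id_V`.
-/

theorem eq_add_of_natCard_eq_four {G : Type*} [AddCommGroup G] [Finite G]
    (hcard : Nat.card G = 4) (hG : ∀ a : G, a + a = 0) {x y z : G}
    (hx : x ≠ 0) (hy : y ≠ 0) (hz : z ≠ 0) (hxy : x ≠ y) (hxz : x ≠ z) (hyz : y ≠ z) :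
    x = y + z := by
  have := Fintype.ofFinite G
  by_contra hne
  have hyz0 : y + z ≠ 0 := fun h => hyz (add_right_cancel (h.trans (hG z).symm))
  have hnodup : [0, x, y, z, y + z].Nodup := by
    simp_all [eq_comm (a := (0 : G))]
  simpa [← Nat.card_eq_fintype_card, hcard] using hnodup.length_le_card

theorem GaloisField.two_two_add_eq {φ : Fin 3 → GaloisField 2 2} (hinj : Function.Injective φ)
    (h0 : ∀ i, φ i ≠ 0) (x : Fin 3) : φ (x + 1) + φ (x + 2) = φ x := by
  have hdistinct : x ≠ x + 1 ∧ x ≠ x + 2 ∧ x + 1 ≠ x + 2 := by revert x; decide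
  obtain ⟨h01, h02, h12⟩ := hdistinct
  exact (eq_add_of_natCard_eq_four (GaloisField.card 2 2 two_ne_zero) CharTwo.add_self_eq_zero
    (h0 x) (h0 _) (h0 _) (hinj.ne h01) (hinj.ne h02) (hinj.ne h12)).symm

section Insertion

variable {n : ℕ} (p : Fin n) (c : Fin n → Fin 3) (a b : Fin 3)

theorem ins_castSucc : ins p c a b p.castSucc = a := by
  simp [ins]

theorem ins_succAbove (j : Fin n) :
    ins p c a b (p.castSucc.succAbove j) = Function.update c p b j := by
  rcases lt_or_ge j.val p.val with hjp | hpj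
  · rw [Fin.succAbove_of_castSucc_lt _ _ (Fin.castSucc_lt_castSucc_iff.mpr hjp),
      Function.update_of_ne (by rintro rfl; omega)]
    simp only [ins, Fin.val_castSucc, dif_pos hjp]
  · rw [Fin.succAbove_of_le_castSucc _ _ (Fin.castSucc_le_castSucc_iff.mpr hpj)]
    simp only [ins, Fin.val_succ, dif_neg (show ¬ j.val + 1 < p.val by omega)]
    rcases eq_or_ne j p with rfl | hne
    · rw [dif_neg (by omega), dif_pos rfl, Function.update_self]
    · have hpj' : p.val < j.val := lt_of_le_of_ne hpj (fun h => hne (Fin.ext h.symm))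
      rw [dif_neg (by omega), dif_neg (by omega), Function.update_of_ne hne]
      exact congrArg c (Fin.ext (by simp))

theorem sum_ins {M : Type*} [AddCommMonoid M] (f : Fin 3 → M) :
    ∑ q, f (ins p c a b q) = f a + f b + ∑ q ∈ Finset.univ.erase p, f (c q) := by
  rw [Fin.sum_univ_succAbove (fun q => f (ins p c a b q)) p.castSucc, ins_castSucc]
  simp only [ins_succAbove]
  rw [← Finset.add_sum_erase _ _ (Finset.mem_univ p), Function.update_self, ← add_assoc]
  congr 1
  exact Finset.sum_congr rfl fun j hj =>
    congrArg f (Function.update_of_ne (Finset.ne_of_mem_erase hj) b c)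

theorem sum_ins_split {M : Type*} [AddCommMonoid M] {f : Fin 3 → M}
    (hf : ∀ x, f (x + 1) + f (x + 2) = f x) {a b : Fin 3}
    (hab : (a, b) = (c p + 1, c p + 2) ∨ (a, b) = (c p + 2, c p + 1)) :
    ∑ q, f (ins p c a b q) = ∑ q, f (c q) := by
  have hsplit : f a + f b = f (c p) := by
    rw [← hf (c p)]
    rcases hab with hab | hab <;> simp only [Prod.mk.injEq] at hab <;> rw [hab.1, hab.2]
    exact add_comm _ _
  rw [sum_ins, hsplit, Finset.add_sum_erase _ (fun q => f (c q)) (Finset.mem_univ p)]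

end Insertion

theorem treeStep_apply (K : Type*) [Field K] {n : ℕ} (p : Fin n) (v : W K n)
    (c : Fin (n + 1) → Fin 3) :
    treeStep K p v c = ∑ c' : Fin n → Fin 3, v c' *
      ((if c = ins p c' (c' p + 1) (c' p + 2) then (1 : K) else 0) +
       (if c = ins p c' (c' p + 2) (c' p + 1) then (1 : K) else 0)) := by
  rw [treeStep, Module.Basis.constr_apply_fintype]
  simp [Pi.basisFun_equivFun, Finset.sum_apply, Pi.single_apply, mul_add]

theorem exists_ins_of_treeStep_apply_ne_zero {K : Type*} [Field K] {n : ℕ} {p : Fin n}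
    {v : W K n} {c : Fin (n + 1) → Fin 3} (hc : treeStep K p v c ≠ 0) :
    ∃ c' a b, v c' ≠ 0 ∧ ((a, b) = (c' p + 1, c' p + 2) ∨ (a, b) = (c' p + 2, c' p + 1)) ∧
      c = ins p c' a b := by
  rw [treeStep_apply] at hc
  obtain ⟨c', -, hterm⟩ := Finset.exists_ne_zero_of_sum_ne_zero hc
  have hv : v c' ≠ 0 := left_ne_zero_of_mul hterm
  by_cases h₁ : c = ins p c' (c' p + 1) (c' p + 2)
  · exact ⟨c', _, _, hv, Or.inl rfl, h₁⟩
  by_cases h₂ : c = ins p c' (c' p + 2) (c' p + 1)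
  · exact ⟨c', _, _, hv, Or.inr rfl, h₂⟩
  simp [h₁, h₂] at hterm

theorem eq_const_of_eW_apply_ne_zero {K : Type*} [Field K] {i : Fin 3} {c : Fin 1 → Fin 3}
    (hc : eW K i c ≠ 0) : c = fun _ => i := by
  by_contra hne
  exact hc (Pi.single_eq_of_ne hne 1)

theorem IsTree.sum_apply_eq_of_apply_ne_zero {K : Type*} [Field K] {M : Type*}
    [AddCommMonoid M] {f : Fin 3 → M} (hf : ∀ x, f (x + 1) + f (x + 2) = f x) {n : ℕ}
    {g : W K 1 →ₗ[K] W K n} (hg : IsTree K g) {i : Fin 3} {c : Fin n → Fin 3}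
    (hc : g (eW K i) c ≠ 0) : f i = ∑ q, f (c q) := by
  induction hg with
  | id => simp [eq_const_of_eW_apply_ne_zero hc]
  | step p _ ih =>
    obtain ⟨c', a, b, hc', hab, rfl⟩ := exists_ins_of_treeStep_apply_ne_zero hc
    rw [sum_ins_split p c' hf hab]
    exact ih hc'

theorem stmt13_general (K : Type*) [Field K]
    (φ : Fin 3 → GaloisField 2 2) (hinj : Function.Injective φ) (h0 : ∀ i, φ i ≠ 0)
    {n : ℕ} (g : W K 1 →ₗ[K] W K n) (hg : IsTree K g)
    (i : Fin 3) (c : Fin n → Fin 3) (hc : g (eW K i) c ≠ 0) :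
    φ i = ∑ q, φ (c q) :=
  hg.sum_apply_eq_of_apply_ne_zero (GaloisField.two_two_add_eq hinj h0) hc

/-- If the coefficient of `e_{c 1} ⊗ ⋯ ⊗ e_{c n}` in `g (e i)` is nonzero for a
descendant binary tree operator `g`, then under any identification `φ` of the three
colors with the three nonzero elements of `𝔽₄`, `φ i = ∑ q, φ (c q)`. -/
theorem stmt13 (K : Type*) [Field K] [CharZero K]
    (φ : Fin 3 → GaloisField 2 2) (hinj : Function.Injective φ) (h0 : ∀ i, φ i ≠ 0)
    {n : ℕ} (g : W K 1 →ₗ[K] W K n) (hg : IsTree K g)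
    (i : Fin 3) (c : Fin n → Fin 3) (hc : g (eW K i) c ≠ 0) :
    φ i = ∑ q, φ (c q) :=
  stmt13_general K φ hinj h0 g hg i c hc
end

section
/- Let f, g: V → V^{⊗n} be descendant binary tree operators on V = K^3 (compositions of maps id^{⊗p}⊗λ⊗id^{⊗q}, with λ(eᵢ)=eⱼ⊗eₖ+eₖ⊗eⱼ), and let f* be the adjoint of f. Then f*∘g = ⟨g(e₁), f(e₁)⟩ · id_V; in particular ⟨g(e₁),f(e₁)⟩ = ⟨g(e₂),f(e₂)⟩ = ⟨g(e₃),f(e₃)⟩ and ⟨g(eᵢ),f(eⱼ)⟩ = 0 for i ≠ j. -/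
/-!
A descendant tree operator is a composite of local splittings `λ`, so it commutes with every
operator on the tensor powers that commutes with `λ` locally. Two families of such operators
do the work. The diagonal weights `e_c ↦ (∏ t(c_q)) e_c` commute with `λ` whenever
`t(k+1) t(k+2) = t(k)`; they are self-adjoint, and taking `t = 1` at `i` and `-1` elsewhere
gives `⟨g eᵢ, f eⱼ⟩ = -⟨g eᵢ, f eⱼ⟩` for `i ≠ j`. The cyclic colour shifts commute with `λ`
and are orthogonal, so `⟨g eᵢ, f eᵢ⟩` does not depend on `i`. Reading `f* ∘ g` off the inner
products `⟨eₖ, f* (g eᵢ)⟩ = ⟨g eᵢ, f eₖ⟩` gives the scalar operator.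
-/

section TreeOperators

variable {K : Type*} [Field K]

lemma ip_comm {n : ℕ} (x y : W K n) : ip x y = ip y x := dotProduct_comm x y

lemma ip_smul_left {n : ℕ} (a : K) (x y : W K n) : ip (a • x) y = a * ip x y :=
  smul_dotProduct a x y

lemma ip_smul_right {n : ℕ} (a : K) (x y : W K n) : ip x (a • y) = a * ip x y :=
  dotProduct_smul a x y

lemma ip_eW (i : Fin 3) (x : W K 1) : ip (eW K i) x = x (fun _ => i) :=
  single_one_dotProduct _ x

lemma eW_apply (i k : Fin 3) : eW K i (fun _ => k) = if k = i then 1 else 0 := by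
  simp only [eW, Pi.single_apply, funext_iff, forall_const]

lemma eq_of_forall_ip_eW {x y : W K 1} (h : ∀ k, ip (eW K k) x = ip (eW K k) y) : x = y := by
  funext c
  have hc : c = fun _ => c 0 := funext fun q => congrArg c (Subsingleton.elim q 0)
  rw [hc, ← ip_eW (c 0) x, ← ip_eW (c 0) y, h]

lemma linearMap_ext_eW {M : Type*} [AddCommMonoid M] [Module K M] {φ ψ : W K 1 →ₗ[K] M}
    (h : ∀ i, φ (eW K i) = ψ (eW K i)) : φ = ψ := by
  refine (Pi.basisFun K (Fin 1 → Fin 3)).ext fun d => ?_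
  have hd : d = fun _ => d 0 := funext fun q => congrArg d (Subsingleton.elim q 0)
  rw [Pi.basisFun_apply, hd]
  exact h (d 0)

lemma ins_eq_insertNth {n : ℕ} (p : Fin n) (c : Fin n → Fin 3) (a b : Fin 3) :
    ins p c a b = Fin.insertNth p.castSucc a (Function.update c p b) := by
  funext q
  refine Fin.succAboveCases p.castSucc ?_ (fun i => ?_) q
  · simp [ins]
  · rw [Fin.insertNth_apply_succAbove, Function.update_apply]
    rcases lt_trichotomy i p with h | rfl | h
    · rw [Fin.succAbove_of_castSucc_lt _ _ (Fin.castSucc_lt_castSucc_iff.mpr h)]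
      simp [ins, h, h.ne]
    · rw [Fin.succAbove_of_le_castSucc _ _ le_rfl]
      simp [ins]
    · rw [Fin.succAbove_of_le_castSucc _ _ (Fin.castSucc_le_castSucc_iff.mpr h.le)]
      have hv : (p : ℕ) < i := h
      simp only [ins, Fin.val_succ]
      split_ifs <;> first | omega | exact congrArg c (Fin.ext (by simp))

lemma comp_ins {n : ℕ} (σ : Fin 3 → Fin 3) (p : Fin n) (c : Fin n → Fin 3) (a b : Fin 3) :
    σ ∘ ins p c a b = ins p (σ ∘ c) (σ a) (σ b) := by
  funext q
  simp only [ins, Function.comp_apply]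
  split_ifs <;> rfl

lemma prod_comp_ins {M : Type*} [CommMonoid M] (F : Fin 3 → M) {n : ℕ} (p : Fin n)
    (c : Fin n → Fin 3) (a b : Fin 3) (hab : F a * F b = F (c p)) :
    ∏ q, F (ins p c a b q) = ∏ q, F (c q) := by
  rw [Fin.prod_univ_succAbove _ p.castSucc, ins_eq_insertNth]
  simp only [Fin.insertNth_apply_same, Fin.insertNth_apply_succAbove]
  have hF : (fun q => F (Function.update c p b q)) = Function.update (F ∘ c) p (F b) :=
    Function.comp_update F c p b
  rw [hF, Finset.prod_update_of_mem (Finset.mem_univ p), ← mul_assoc, hab]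
  exact (Finset.prod_eq_mul_prod_sdiff_singleton_of_mem (Finset.mem_univ p) (F ∘ c)).symm

lemma treeStep_single {n : ℕ} (p : Fin n) (c : Fin n → Fin 3) :
    treeStep K p (Pi.single c 1) =
      Pi.single (ins p c (c p + 1) (c p + 2)) 1 + Pi.single (ins p c (c p + 2) (c p + 1)) 1 := by
  rw [treeStep, ← Pi.basisFun_apply K, Module.Basis.constr_basis]

lemma IsTree.comp_commute {T : ∀ n, W K n →ₗ[K] W K n}
    (hT : ∀ n (p : Fin n), T (n + 1) ∘ₗ treeStep K p = treeStep K p ∘ₗ T n)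
    {n : ℕ} {f : W K 1 →ₗ[K] W K n} (hf : IsTree K f) : T n ∘ₗ f = f ∘ₗ T 1 := by
  induction hf with
  | id => rw [LinearMap.comp_id, LinearMap.id_comp]
  | step p _ ih => rw [← LinearMap.comp_assoc, hT, LinearMap.comp_assoc, ih, LinearMap.comp_assoc]

def colorWeight (t : Fin 3 → K) (n : ℕ) : W K n →ₗ[K] W K n where
  toFun x c := (∏ q, t (c q)) * x c
  map_add' x y := by funext c; simp [mul_add]
  map_smul' a x := by funext c; simp only [Pi.smul_apply, smul_eq_mul, RingHom.id_apply]; ring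

lemma colorWeight_single (t : Fin 3 → K) {n : ℕ} (c : Fin n → Fin 3) :
    colorWeight t n (Pi.single c 1) = (∏ q, t (c q)) • Pi.single c 1 := by
  funext d
  rcases eq_or_ne d c with rfl | h
  · simp [colorWeight]
  · simp [colorWeight, h]

lemma colorWeight_eW (t : Fin 3 → K) (i : Fin 3) : colorWeight t 1 (eW K i) = t i • eW K i := by
  rw [eW, colorWeight_single, Fin.prod_univ_one]

lemma ip_colorWeight {n : ℕ} (t : Fin 3 → K) (x y : W K n) :
    ip (colorWeight t n x) y = ip x (colorWeight t n y) :=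
  Finset.sum_congr rfl fun _ _ => (mul_assoc _ _ _).trans (mul_left_comm _ _ _)

lemma colorWeight_comp_treeStep (t : Fin 3 → K) (ht : ∀ k, t (k + 1) * t (k + 2) = t k)
    {n : ℕ} (p : Fin n) :
    colorWeight t (n + 1) ∘ₗ treeStep K p = treeStep K p ∘ₗ colorWeight t n := by
  refine (Pi.basisFun K (Fin n → Fin 3)).ext fun c => ?_
  simp only [Pi.basisFun_apply, LinearMap.comp_apply, treeStep_single, map_add,
    colorWeight_single, map_smul]
  rw [prod_comp_ins t p c _ _ (ht (c p)), prod_comp_ins t p c _ _ ((mul_comm _ _).trans (ht (c p))),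
    smul_add]

/-- Sends `e_c` to `e_{c + s}`. -/
def colorShift (s : Fin 3) (n : ℕ) : W K n →ₗ[K] W K n :=
  LinearMap.funLeft K K fun c q => c q - s

lemma colorShift_single (s : Fin 3) {n : ℕ} (c : Fin n → Fin 3) :
    colorShift s n (Pi.single c (1 : K)) = Pi.single (fun q => c q + s) 1 := by
  funext d
  simp only [colorShift, LinearMap.funLeft_apply, Pi.single_apply, funext_iff, sub_eq_iff_eq_add]

lemma colorShift_eW (s i : Fin 3) : colorShift s 1 (eW K i) = eW K (i + s) :=
  colorShift_single s _

lemma ip_colorShift {n : ℕ} (s : Fin 3) (x y : W K n) :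
    ip (colorShift s n x) (colorShift s n y) = ip x y :=
  Fintype.sum_equiv (Equiv.piCongrRight fun _ => Equiv.subRight s) _ _ fun _ => rfl

lemma colorShift_comp_treeStep (s : Fin 3) {n : ℕ} (p : Fin n) :
    colorShift s (n + 1) ∘ₗ treeStep K p = treeStep K p ∘ₗ colorShift s n := by
  refine (Pi.basisFun K (Fin n → Fin 3)).ext fun c => ?_
  have hadd : ∀ a b, (fun q => ins p c a b q + s) = ins p (fun q => c q + s) (a + s) (b + s) :=
    fun a b => comp_ins (· + s) p c a b
  simp only [Pi.basisFun_apply, LinearMap.comp_apply, treeStep_single, map_add,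
    colorShift_single, hadd, add_right_comm _ _ s]

section TreeInnerProducts

variable {n : ℕ} {f g : W K 1 →ₗ[K] W K n}

lemma weight_mul_ip_tree_eW (hf : IsTree K f) (hg : IsTree K g) (t : Fin 3 → K)
    (ht : ∀ k, t (k + 1) * t (k + 2) = t k) (i j : Fin 3) :
    t i * ip (g (eW K i)) (f (eW K j)) = t j * ip (g (eW K i)) (f (eW K j)) := by
  have hT := fun n => colorWeight_comp_treeStep (K := K) (n := n) t ht
  have hgi := LinearMap.congr_fun (hg.comp_commute hT) (eW K i)
  have hfj := LinearMap.congr_fun (hf.comp_commute hT) (eW K j)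
  simp only [LinearMap.comp_apply, colorWeight_eW, map_smul] at hgi hfj
  rw [← ip_smul_left, ← hgi, ip_colorWeight, hfj, ip_smul_right]

lemma ip_tree_eW_of_ne (hf : IsTree K f) (hg : IsTree K g) (h2 : (2 : K) ≠ 0) {i j : Fin 3}
    (hij : i ≠ j) : ip (g (eW K i)) (f (eW K j)) = 0 := by
  set t : Fin 3 → K := fun k => if k = i then 1 else -1
  have ht : ∀ k, t (k + 1) * t (k + 2) = t k := by
    intro k
    fin_cases i <;> fin_cases k <;> simp [t]
  have h := weight_mul_ip_tree_eW hf hg t ht i j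
  simp only [t, if_pos rfl, if_neg hij.symm] at h
  have h2x : (2 : K) * ip (g (eW K i)) (f (eW K j)) = 0 := by linear_combination h
  exact (mul_eq_zero.mp h2x).resolve_left h2

lemma ip_tree_eW_add (hf : IsTree K f) (hg : IsTree K g) (i j s : Fin 3) :
    ip (g (eW K (i + s))) (f (eW K (j + s))) = ip (g (eW K i)) (f (eW K j)) := by
  have hgi := LinearMap.congr_fun (hg.comp_commute fun _ => colorShift_comp_treeStep s) (eW K i)
  have hfj := LinearMap.congr_fun (hf.comp_commute fun _ => colorShift_comp_treeStep s) (eW K j)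
  simp only [LinearMap.comp_apply, colorShift_eW] at hgi hfj
  rw [← hgi, ← hfj, ip_colorShift]

lemma ip_tree_eW_self_eq (hf : IsTree K f) (hg : IsTree K g) (i j : Fin 3) :
    ip (g (eW K i)) (f (eW K i)) = ip (g (eW K j)) (f (eW K j)) := by
  simpa using (ip_tree_eW_add hf hg i i (j - i)).symm

end TreeInnerProducts

end TreeOperators

/-- For descendant binary tree operators `f, g : V → V^{⊗ n}` and the adjoint `f*` of
`f`, we have `f* ∘ g = ⟨g e₁, f e₁⟩ • id_V`; in particular the inner products
`⟨g eᵢ, f eᵢ⟩` coincide for `i = 1, 2, 3` and `⟨g eᵢ, f eⱼ⟩ = 0` for `i ≠ j`. -/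
theorem stmt16 (K : Type*) [Field K] [CharZero K]
    {n : ℕ} (f g : W K 1 →ₗ[K] W K n) (hf : IsTree K f) (hg : IsTree K g)
    (fstar : W K n →ₗ[K] W K 1)
    (hadj : ∀ (v : W K 1) (w : W K n), ip (f v) w = ip v (fstar w)) :
    fstar ∘ₗ g = ip (g (eW K 0)) (f (eW K 0)) • LinearMap.id ∧
    (∀ i j : Fin 3, i ≠ j → ip (g (eW K i)) (f (eW K j)) = 0) ∧
    (∀ i j : Fin 3, ip (g (eW K i)) (f (eW K i)) = ip (g (eW K j)) (f (eW K j))) := by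
  have offdiag := fun i j (hij : i ≠ j) => ip_tree_eW_of_ne hf hg two_ne_zero hij
  have diag := ip_tree_eW_self_eq hf hg
  refine ⟨linearMap_ext_eW fun i => eq_of_forall_ip_eW fun k => ?_, offdiag, diag⟩
  rw [LinearMap.comp_apply, LinearMap.smul_apply, LinearMap.id_apply, ← hadj, ip_comm,
    ip_smul_right, ip_eW, eW_apply]
  rcases eq_or_ne k i with rfl | hki
  · rw [if_pos rfl, mul_one, diag]
  · rw [if_neg hki, mul_zero, offdiag i k hki.symm]
end
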